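/- arXiv:1404.6751 — 3 statements merged into one kernel-verified Lean document; each statement's English description precedes it below -/
import Mathlib

section
/- For u, v, w in the 3-dimensional Heisenberg group ℍ₁ with Koranyi metric d, one has (1/2)(d(u,v)⁴ + d(v,w)⁴) ≥ (d(u,w)/2)⁴ + d((u+w)/2, v)⁴ + 2⁻⁴·NH(u⁻¹w)⁴, where (u+w)/2 is the affine (Euclidean coordinate-wise) midpoint of u and w, and NH(x,y,z) = |z|^{1/2}. -/
/-- The 3-dimensional Heisenberg group as ℝ³ with its group product. -/
noncomputable def Hmul (a b : ℝ × ℝ × ℝ) : ℝ × ℝ × ℝ :=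
  (a.1 + b.1, a.2.1 + b.2.1, a.2.2 + b.2.2 + (a.1 * b.2.1 - b.1 * a.2.1) / 2)

/-- Group inverse in the Heisenberg group. -/
noncomputable def Hinv (a : ℝ × ℝ × ℝ) : ℝ × ℝ × ℝ := (-a.1, -a.2.1, -a.2.2)

/-- The Koranyi norm. -/
noncomputable def KN (a : ℝ × ℝ × ℝ) : ℝ :=
  ((a.1 ^ 2 + a.2.1 ^ 2) ^ 2 + a.2.2 ^ 2) ^ ((1 : ℝ) / 4)

/-- The Koranyi metric. -/
noncomputable def Kd (g h : ℝ × ℝ × ℝ) : ℝ := KN (Hmul (Hinv g) h)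

/-- Non-horizontality: NH(x,y,z) = |z|^(1/2). -/
noncomputable def NH (a : ℝ × ℝ × ℝ) : ℝ := |a.2.2| ^ ((1 : ℝ) / 2)

/-- Affine (coordinate-wise) midpoint. -/
noncomputable def Hmid (a b : ℝ × ℝ × ℝ) : ℝ × ℝ × ℝ :=
  ((a.1 + b.1) / 2, (a.2.1 + b.2.1) / 2, (a.2.2 + b.2.2) / 2)

lemma KN_pow4 (a : ℝ × ℝ × ℝ) : KN a ^ 4 = (a.1 ^ 2 + a.2.1 ^ 2) ^ 2 + a.2.2 ^ 2 := by
  have ht : (0:ℝ) ≤ (a.1 ^ 2 + a.2.1 ^ 2) ^ 2 + a.2.2 ^ 2 := by positivity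
  rw [KN, ← Real.rpow_natCast (((a.1 ^ 2 + a.2.1 ^ 2) ^ 2 + a.2.2 ^ 2) ^ ((1:ℝ)/4)) 4,
    ← Real.rpow_mul ht]
  norm_num

lemma NH_pow4 (a : ℝ × ℝ × ℝ) : NH a ^ 4 = a.2.2 ^ 2 := by
  rw [NH, ← Real.rpow_natCast (|a.2.2| ^ ((1:ℝ)/2)) 4, ← Real.rpow_mul (abs_nonneg _)]
  norm_num [Real.rpow_natCast, sq_abs]

set_option maxHeartbeats 2000000 in
theorem stmt_5 (u v w : ℝ × ℝ × ℝ) :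
    (Kd u w / 2) ^ 4 + Kd (Hmid u w) v ^ 4 + 2 ^ (-(4:ℤ)) * NH (Hmul (Hinv u) w) ^ 4
      ≤ (1 / 2) * (Kd u v ^ 4 + Kd v w ^ 4) := by
  obtain ⟨u1, u2, u3⟩ := u
  obtain ⟨v1, v2, v3⟩ := v
  obtain ⟨w1, w2, w3⟩ := w
  have h1 : (Kd (u1, u2, u3) (w1, w2, w3) / 2) ^ 4
      = Kd (u1, u2, u3) (w1, w2, w3) ^ 4 / 16 := by ring
  rw [h1]
  simp only [Kd, Hmid, Hmul, Hinv, KN_pow4, NH_pow4]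
  norm_num
  nlinarith [sq_nonneg ((w3 - u3 - (u1*w2 - w1*u2)/2) + ((v2-u2)*(w1-u1) - (v1-u1)*(w2-u2))),
    sq_nonneg (2*((v1-u1)*(w1-u1) + (v2-u2)*(w2-u2)) - ((w1-u1)^2 + (w2-u2)^2)),
    sq_nonneg ((v2-u2)*(w1-u1) - (v1-u1)*(w2-u2))]
end

section
/- For u, v, w in the 3-dimensional Heisenberg group ℍ₁ with Koranyi metric d, d(u,v)⁴ ≤ 32·( d((u+w)/2, (v+w)/2)⁴ + NH(u⁻¹w)⁴ + NH(v⁻¹w)⁴ ), where midpoints are affine (coordinate-wise) midpoints and NH(x,y,z) = |z|^{1/2}. -/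
lemma aux_sq (m a b : ℝ) : (4*m - a + b)^2 ≤ 32*m^2 + 32*a^2 + 32*b^2 := by
  nlinarith [sq_nonneg (m + a), sq_nonneg (m - b), sq_nonneg (a + b), sq_nonneg m, sq_nonneg a, sq_nonneg b]

theorem stmt_6 (u v w : ℝ × ℝ × ℝ) :
    Kd u v ^ 4 ≤ 32 * (Kd (Hmid u w) (Hmid v w) ^ 4
      + NH (Hmul (Hinv u) w) ^ 4 + NH (Hmul (Hinv v) w) ^ 4) := by
  obtain ⟨u1, u2, u3⟩ := u
  obtain ⟨v1, v2, v3⟩ := v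
  obtain ⟨w1, w2, w3⟩ := w
  simp only [Kd, Hmid, Hmul, Hinv, KN_pow4, NH_pow4]
  have key := aux_sq ((v3-u3)/2 + ((u2+w2)*(v1+w1) - (u1+w1)*(v2+w2))/8)
    (w3 - u3 + (u2*w1 - u1*w2)/2) (w3 - v3 + (v2*w1 - v1*w2)/2)
  have hM : (0:ℝ) ≤ ((v1-u1)^2+(v2-u2)^2)^2 := by positivity
  linarith [key, hM]
end

section
/- For every x, y, z, w in the 3-dimensional Heisenberg group ℍ₁ with Koranyi metric d, (1/2)(2d(x,y)⁴ + d(y,w)⁴ + d(y,z)⁴) ≥ (d(x,w)⁴ + d(x,z)⁴)/2⁴ + d(z,w)⁴/512. -/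
private lemma kd_pow4 (g h : ℝ × ℝ × ℝ) :
    Kd g h ^ 4 = ((h.1 - g.1) ^ 2 + (h.2.1 - g.2.1) ^ 2) ^ 2
      + (h.2.2 - g.2.2 - (g.1 * h.2.1 - h.1 * g.2.1) / 2) ^ 2 := by
  have h1 : Kd g h = (((h.1 - g.1) ^ 2 + (h.2.1 - g.2.1) ^ 2) ^ 2
      + (h.2.2 - g.2.2 - (g.1 * h.2.1 - h.1 * g.2.1) / 2) ^ 2) ^ ((1:ℝ)/4) := by
    simp only [Kd, KN, Hmul, Hinv]
    ring_nf
  rw [h1, ← Real.rpow_natCast _ 4, ← Real.rpow_mul (by positivity)]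
  norm_num

set_option maxHeartbeats 2000000 in
theorem stmt_7 (x y z w : ℝ × ℝ × ℝ) :
    (Kd x w ^ 4 + Kd x z ^ 4) / 2 ^ 4 + Kd z w ^ 4 / 512
      ≤ (1 / 2) * (2 * Kd x y ^ 4 + Kd y w ^ 4 + Kd y z ^ 4) := by
  obtain ⟨x1, x2, x3⟩ := x
  obtain ⟨y1, y2, y3⟩ := y
  obtain ⟨z1, z2, z3⟩ := z
  obtain ⟨w1, w2, w3⟩ := w
  rw [kd_pow4, kd_pow4, kd_pow4, kd_pow4, kd_pow4, kd_pow4]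
  simp only []
  have hsos : (0:ℝ) ≤
      ((3 : ℝ)/2) * ((1 : ℝ) * (x1 - y1)*(z1 + x1 - 2*y1) + ((37525 : ℝ)/98304) * (x2 - y2)*(z2 + x2 - 2*y2) + ((251 : ℝ)/98304) * (x2 - y2)*(w2 + x2 - 2*y2) + ((-1 : ℝ)/2) * (z1 + x1 - 2*y1)*(z1 + x1 - 2*y1) + ((-695 : ℝ)/98304) * (z1 + x1 - 2*y1)*(w1 + x1 - 2*y1) + ((-4513 : ℝ)/16384) * (z2 + x2 - 2*y2)*(z2 + x2 - 2*y2) + ((-23 : ℝ)/98304) * (z2 + x2 - 2*y2)*(w2 + x2 - 2*y2) + ((695 : ℝ)/98304) * (w1 + x1 - 2*y1)*(w1 + x1 - 2*y1) + ((167 : ℝ)/49152) * (w2 + x2 - 2*y2)*(w2 + x2 - 2*y2))^2 +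
      ((991 : ℝ)/2048) * ((1 : ℝ) * (x1 - y1)*(z2 + x2 - 2*y2) + ((1 : ℝ)/991) * (x1 - y1)*(w2 + x2 - 2*y2) + ((29067 : ℝ)/31712) * (x2 - y2)*(z1 + x1 - 2*y1) + ((-283 : ℝ)/31712) * (x2 - y2)*(w1 + x1 - 2*y1) + ((-11037 : ℝ)/15856) * (z1 + x1 - 2*y1)*(z2 + x2 - 2*y2) + ((-219 : ℝ)/31712) * (z1 + x1 - 2*y1)*(w2 + x2 - 2*y2) + ((-151 : ℝ)/15856) * (z2 + x2 - 2*y2)*(w1 + x1 - 2*y1) + ((105 : ℝ)/15856) * (w1 + x1 - 2*y1)*(w2 + x2 - 2*y2) + ((-64 : ℝ)/991) * (x3 - y3 - (y1*x2 - x1*y2)/2) + ((62 : ℝ)/991) * (z3 - y3 - (y1*z2 - z1*y2)/2) + ((2 : ℝ)/991) * (w3 - y3 - (y1*w2 - w1*y2)/2))^2 +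
      ((3 : ℝ)/2) * ((1 : ℝ) * (x1 - y1)*(w1 + x1 - 2*y1) + ((251 : ℝ)/98304) * (x2 - y2)*(z2 + x2 - 2*y2) + ((37525 : ℝ)/98304) * (x2 - y2)*(w2 + x2 - 2*y2) + ((695 : ℝ)/98304) * (z1 + x1 - 2*y1)*(z1 + x1 - 2*y1) + ((-695 : ℝ)/98304) * (z1 + x1 - 2*y1)*(w1 + x1 - 2*y1) + ((167 : ℝ)/49152) * (z2 + x2 - 2*y2)*(z2 + x2 - 2*y2) + ((-23 : ℝ)/98304) * (z2 + x2 - 2*y2)*(w2 + x2 - 2*y2) + ((-1 : ℝ)/2) * (w1 + x1 - 2*y1)*(w1 + x1 - 2*y1) + ((-4513 : ℝ)/16384) * (w2 + x2 - 2*y2)*(w2 + x2 - 2*y2))^2 +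
      ((15345 : ℝ)/31712) * ((1 : ℝ) * (x1 - y1)*(w2 + x2 - 2*y2) + ((-3869 : ℝ)/392832) * (x2 - y2)*(z1 + x1 - 2*y1) + ((360071 : ℝ)/392832) * (x2 - y2)*(w1 + x1 - 2*y1) + ((3197 : ℝ)/436480) * (z1 + x1 - 2*y1)*(z2 + x2 - 2*y2) + ((-299063 : ℝ)/31426560) * (z1 + x1 - 2*y1)*(w2 + x2 - 2*y2) + ((-216727 : ℝ)/31426560) * (z2 + x2 - 2*y2)*(w1 + x1 - 2*y1) + ((-303827 : ℝ)/436480) * (w1 + x1 - 2*y1)*(w2 + x2 - 2*y2) + ((-2 : ℝ)/31) * (x3 - y3 - (y1*x2 - x1*y2)/2) + ((2 : ℝ)/1023) * (z3 - y3 - (y1*z2 - z1*y2)/2) + ((64 : ℝ)/1023) * (w3 - y3 - (y1*w2 - w1*y2)/2))^2 +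
      ((497552425 : ℝ)/6436159488) * ((1 : ℝ) * (x2 - y2)*(z1 + x1 - 2*y1) + ((11346547 : ℝ)/99510485) * (x2 - y2)*(w1 + x1 - 2*y1) + ((-180588456 : ℝ)/497552425) * (z1 + x1 - 2*y1)*(z2 + x2 - 2*y2) + ((-40948153 : ℝ)/1990209700) * (z1 + x1 - 2*y1)*(w2 + x2 - 2*y2) + ((21863923 : ℝ)/1990209700) * (z2 + x2 - 2*y2)*(w1 + x1 - 2*y1) + ((-19631124 : ℝ)/497552425) * (w1 + x1 - 2*y1)*(w2 + x2 - 2*y2) + ((383505408 : ℝ)/497552425) * (x3 - y3 - (y1*x2 - x1*y2)/2) + ((-373377984 : ℝ)/497552425) * (z3 - y3 - (y1*z2 - z1*y2)/2) + ((-10127424 : ℝ)/497552425) * (w3 - y3 - (y1*w2 - w1*y2)/2))^2 +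
      ((4127743895 : ℝ)/3221225472) * ((1 : ℝ) * (x2 - y2)*(z2 + x2 - 2*y2) + ((-1883755 : ℝ)/825548779) * (x2 - y2)*(w2 + x2 - 2*y2) + ((-817621357 : ℝ)/8255487790) * (z1 + x1 - 2*y1)*(z1 + x1 - 2*y1) + ((11996664 : ℝ)/4127743895) * (z1 + x1 - 2*y1)*(w1 + x1 - 2*y1) + ((-1907910046 : ℝ)/4127743895) * (z2 + x2 - 2*y2)*(z2 + x2 - 2*y2) + ((-33726216 : ℝ)/4127743895) * (z2 + x2 - 2*y2)*(w2 + x2 - 2*y2) + ((19090813 : ℝ)/8255487790) * (w1 + x1 - 2*y1)*(w1 + x1 - 2*y1) + ((31292254 : ℝ)/4127743895) * (w2 + x2 - 2*y2)*(w2 + x2 - 2*y2))^2 +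
      ((199038622029 : ℝ)/2608607657984) * ((1 : ℝ) * (x2 - y2)*(w1 + x1 - 2*y1) + ((300959 : ℝ)/153917660) * (z1 + x1 - 2*y1)*(z2 + x2 - 2*y2) + ((1904947 : ℝ)/141030240) * (z1 + x1 - 2*y1)*(w2 + x2 - 2*y2) + ((-3118877 : ℝ)/141030240) * (z2 + x2 - 2*y2)*(w1 + x1 - 2*y1) + ((-55899289 : ℝ)/153917660) * (w1 + x1 - 2*y1)*(w2 + x2 - 2*y2) + ((128 : ℝ)/185) * (x3 - y3 - (y1*x2 - x1*y2)/2) + ((2848 : ℝ)/43105) * (z3 - y3 - (y1*z2 - z1*y2)/2) + ((-32672 : ℝ)/43105) * (w3 - y3 - (y1*w2 - w1*y2)/2))^2 +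
      ((4437026288902935 : ℝ)/3462602545954816) * ((1 : ℝ) * (x2 - y2)*(w2 + x2 - 2*y2) + ((14107340320349 : ℝ)/6761182916423520) * (z1 + x1 - 2*y1)*(z1 + x1 - 2*y1) + ((499861 : ℝ)/171596880) * (z1 + x1 - 2*y1)*(w1 + x1 - 2*y1) + ((5515686258223 : ℝ)/845147864552940) * (z2 + x2 - 2*y2)*(z2 + x2 - 2*y2) + ((-1405259 : ℝ)/171596880) * (z2 + x2 - 2*y2)*(w2 + x2 - 2*y2) + ((-669593601727411 : ℝ)/6761182916423520) * (w1 + x1 - 2*y1)*(w1 + x1 - 2*y1) + ((-390628437990377 : ℝ)/845147864552940) * (w2 + x2 - 2*y2)*(w2 + x2 - 2*y2))^2 +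
      ((442150389140235853 : ℝ)/9231268408556912640) * ((1 : ℝ) * (z1 + x1 - 2*y1)*(z1 + x1 - 2*y1) + ((-212720128519358773 : ℝ)/10611609339365660472) * (z1 + x1 - 2*y1)*(w1 + x1 - 2*y1) + ((2033124126644003383 : ℝ)/7074406226243773648) * (z2 + x2 - 2*y2)*(z2 + x2 - 2*y2) + ((-53615178589183093 : ℝ)/10611609339365660472) * (z2 + x2 - 2*y2)*(w2 + x2 - 2*y2) + ((-101123783546762822 : ℝ)/442150389140235853) * (w1 + x1 - 2*y1)*(w1 + x1 - 2*y1) + ((-1610332952783164217 : ℝ)/7074406226243773648) * (w2 + x2 - 2*y2)*(w2 + x2 - 2*y2))^2 +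
      ((86110374131 : ℝ)/1260893470720) * ((1 : ℝ) * (z1 + x1 - 2*y1)*(z2 + x2 - 2*y2) + ((446648055 : ℝ)/344441496524) * (z1 + x1 - 2*y1)*(w2 + x2 - 2*y2) + ((446648055 : ℝ)/344441496524) * (z2 + x2 - 2*y2)*(w1 + x1 - 2*y1) + ((-6470012077 : ℝ)/172220748262) * (w1 + x1 - 2*y1)*(w2 + x2 - 2*y2))^2 +
      ((3237203936434989728945581 : ℝ)/100143709871712181155790848) * ((1 : ℝ) * (z1 + x1 - 2*y1)*(w1 + x1 - 2*y1) + ((6797170586955546956019 : ℝ)/6474407872869979457891162) * (z2 + x2 - 2*y2)*(z2 + x2 - 2*y2) + ((37215320816393469177325 : ℝ)/3237203936434989728945581) * (z2 + x2 - 2*y2)*(w2 + x2 - 2*y2) + ((-118143189107450371230840 : ℝ)/3237203936434989728945581) * (w1 + x1 - 2*y1)*(w1 + x1 - 2*y1) + ((-92243438276030431873341 : ℝ)/6474407872869979457891162) * (w2 + x2 - 2*y2)*(w2 + x2 - 2*y2))^2 +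
      ((10297749077613985939 : ℝ)/315574984468432158720) * ((1 : ℝ) * (z1 + x1 - 2*y1)*(w2 + x2 - 2*y2) + ((-460030984699732829 : ℝ)/10297749077613985939) * (z2 + x2 - 2*y2)*(w1 + x1 - 2*y1) + ((4142363576975820 : ℝ)/1471107011087712277) * (w1 + x1 - 2*y1)*(w2 + x2 - 2*y2) + ((-637519877086341120 : ℝ)/10297749077613985939) * (z3 - y3 - (y1*z2 - z1*y2)/2) + ((637519877086341120 : ℝ)/10297749077613985939) * (w3 - y3 - (y1*w2 - w1*y2)/2))^2 +
      ((261022498062376292785427460627 : ℝ)/5940295120989697632532972699648) * ((1 : ℝ) * (z2 + x2 - 2*y2)*(z2 + x2 - 2*y2) + ((-1764237047162182409925023452 : ℝ)/87007499354125430928475820209) * (z2 + x2 - 2*y2)*(w2 + x2 - 2*y2) + ((-46056547996301817847928063980 : ℝ)/261022498062376292785427460627) * (w1 + x1 - 2*y1)*(w1 + x1 - 2*y1) + ((-46457002448963415818356278553 : ℝ)/261022498062376292785427460627) * (w2 + x2 - 2*y2)*(w2 + x2 - 2*y2))^2 +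
      ((10989157551642467221537 : ℝ)/337436641775255091249152) * ((1 : ℝ) * (z2 + x2 - 2*y2)*(w1 + x1 - 2*y1) + ((12444869115378 : ℝ)/4222196606400967) * (w1 + x1 - 2*y1)*(w2 + x2 - 2*y2) + ((154240 : ℝ)/2602711) * (z3 - y3 - (y1*z2 - z1*y2)/2) + ((-154240 : ℝ)/2602711) * (w3 - y3 - (y1*w2 - w1*y2)/2))^2 +
      ((23037484120623508949500784921635 : ℝ)/712765434708995530166073919152128) * ((1 : ℝ) * (z2 + x2 - 2*y2)*(w2 + x2 - 2*y2) + ((-125730758709847814523835147247 : ℝ)/9214993648249403579800313968654) * (w1 + x1 - 2*y1)*(w1 + x1 - 2*y1) + ((-333150162049175901284875651823 : ℝ)/9214993648249403579800313968654) * (w2 + x2 - 2*y2)*(w2 + x2 - 2*y2))^2 +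
      ((39835249090265153921402634197700085 : ℝ)/905870735597509369508690064374562816) * ((1 : ℝ) * (w1 + x1 - 2*y1)*(w1 + x1 - 2*y1) + ((1786190985331057905658746168958997 : ℝ)/7967049818053030784280526839540017) * (w2 + x2 - 2*y2)*(w2 + x2 - 2*y2))^2 +
      ((37740585086926185303 : ℝ)/553411753594187546624) * ((1 : ℝ) * (w1 + x1 - 2*y1)*(w2 + x2 - 2*y2))^2 +
      ((2725784324455877915865519654656069925 : ℝ)/65266072109490428184826075869511819264) * ((1 : ℝ) * (w2 + x2 - 2*y2)*(w2 + x2 - 2*y2))^2 +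
      ((1167 : ℝ)/1480) * ((1 : ℝ) * (x3 - y3 - (y1*x2 - x1*y2)/2) + ((313 : ℝ)/2334) * (z3 - y3 - (y1*z2 - z1*y2)/2) + ((313 : ℝ)/2334) * (w3 - y3 - (y1*w2 - w1*y2)/2))^2 +
      ((583739182999 : ℝ)/1555130233344) * ((1 : ℝ) * (z3 - y3 - (y1*z2 - z1*y2)/2) + ((-2103441905 : ℝ)/83391311857) * (w3 - y3 - (y1*w2 - w1*y2)/2))^2 +
      ((4468877446 : ℝ)/11913044551) * ((1 : ℝ) * (w3 - y3 - (y1*w2 - w1*y2)/2))^2 := by positivity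
  have key : ((1:ℝ) / 2) * (2 * (((y1 - x1)^2 + (y2 - x2)^2)^2 + (y3 - x3 - (x1*y2 - y1*x2)/2)^2) + (((w1 - y1)^2 + (w2 - y2)^2)^2 + (w3 - y3 - (y1*w2 - w1*y2)/2)^2) + (((z1 - y1)^2 + (z2 - y2)^2)^2 + (z3 - y3 - (y1*z2 - z1*y2)/2)^2))
      - (((((w1 - x1)^2 + (w2 - x2)^2)^2 + (w3 - x3 - (x1*w2 - w1*x2)/2)^2) + (((z1 - x1)^2 + (z2 - x2)^2)^2 + (z3 - x3 - (x1*z2 - z1*x2)/2)^2)) / 2 ^ 4 + (((w1 - z1)^2 + (w2 - z2)^2)^2 + (w3 - z3 - (z1*w2 - w1*z2)/2)^2) / 512)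
      = ((3 : ℝ)/2) * ((1 : ℝ) * (x1 - y1)*(z1 + x1 - 2*y1) + ((37525 : ℝ)/98304) * (x2 - y2)*(z2 + x2 - 2*y2) + ((251 : ℝ)/98304) * (x2 - y2)*(w2 + x2 - 2*y2) + ((-1 : ℝ)/2) * (z1 + x1 - 2*y1)*(z1 + x1 - 2*y1) + ((-695 : ℝ)/98304) * (z1 + x1 - 2*y1)*(w1 + x1 - 2*y1) + ((-4513 : ℝ)/16384) * (z2 + x2 - 2*y2)*(z2 + x2 - 2*y2) + ((-23 : ℝ)/98304) * (z2 + x2 - 2*y2)*(w2 + x2 - 2*y2) + ((695 : ℝ)/98304) * (w1 + x1 - 2*y1)*(w1 + x1 - 2*y1) + ((167 : ℝ)/49152) * (w2 + x2 - 2*y2)*(w2 + x2 - 2*y2))^2 +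
      ((991 : ℝ)/2048) * ((1 : ℝ) * (x1 - y1)*(z2 + x2 - 2*y2) + ((1 : ℝ)/991) * (x1 - y1)*(w2 + x2 - 2*y2) + ((29067 : ℝ)/31712) * (x2 - y2)*(z1 + x1 - 2*y1) + ((-283 : ℝ)/31712) * (x2 - y2)*(w1 + x1 - 2*y1) + ((-11037 : ℝ)/15856) * (z1 + x1 - 2*y1)*(z2 + x2 - 2*y2) + ((-219 : ℝ)/31712) * (z1 + x1 - 2*y1)*(w2 + x2 - 2*y2) + ((-151 : ℝ)/15856) * (z2 + x2 - 2*y2)*(w1 + x1 - 2*y1) + ((105 : ℝ)/15856) * (w1 + x1 - 2*y1)*(w2 + x2 - 2*y2) + ((-64 : ℝ)/991) * (x3 - y3 - (y1*x2 - x1*y2)/2) + ((62 : ℝ)/991) * (z3 - y3 - (y1*z2 - z1*y2)/2) + ((2 : ℝ)/991) * (w3 - y3 - (y1*w2 - w1*y2)/2))^2 +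
      ((3 : ℝ)/2) * ((1 : ℝ) * (x1 - y1)*(w1 + x1 - 2*y1) + ((251 : ℝ)/98304) * (x2 - y2)*(z2 + x2 - 2*y2) + ((37525 : ℝ)/98304) * (x2 - y2)*(w2 + x2 - 2*y2) + ((695 : ℝ)/98304) * (z1 + x1 - 2*y1)*(z1 + x1 - 2*y1) + ((-695 : ℝ)/98304) * (z1 + x1 - 2*y1)*(w1 + x1 - 2*y1) + ((167 : ℝ)/49152) * (z2 + x2 - 2*y2)*(z2 + x2 - 2*y2) + ((-23 : ℝ)/98304) * (z2 + x2 - 2*y2)*(w2 + x2 - 2*y2) + ((-1 : ℝ)/2) * (w1 + x1 - 2*y1)*(w1 + x1 - 2*y1) + ((-4513 : ℝ)/16384) * (w2 + x2 - 2*y2)*(w2 + x2 - 2*y2))^2 +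
      ((15345 : ℝ)/31712) * ((1 : ℝ) * (x1 - y1)*(w2 + x2 - 2*y2) + ((-3869 : ℝ)/392832) * (x2 - y2)*(z1 + x1 - 2*y1) + ((360071 : ℝ)/392832) * (x2 - y2)*(w1 + x1 - 2*y1) + ((3197 : ℝ)/436480) * (z1 + x1 - 2*y1)*(z2 + x2 - 2*y2) + ((-299063 : ℝ)/31426560) * (z1 + x1 - 2*y1)*(w2 + x2 - 2*y2) + ((-216727 : ℝ)/31426560) * (z2 + x2 - 2*y2)*(w1 + x1 - 2*y1) + ((-303827 : ℝ)/436480) * (w1 + x1 - 2*y1)*(w2 + x2 - 2*y2) + ((-2 : ℝ)/31) * (x3 - y3 - (y1*x2 - x1*y2)/2) + ((2 : ℝ)/1023) * (z3 - y3 - (y1*z2 - z1*y2)/2) + ((64 : ℝ)/1023) * (w3 - y3 - (y1*w2 - w1*y2)/2))^2 +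
      ((497552425 : ℝ)/6436159488) * ((1 : ℝ) * (x2 - y2)*(z1 + x1 - 2*y1) + ((11346547 : ℝ)/99510485) * (x2 - y2)*(w1 + x1 - 2*y1) + ((-180588456 : ℝ)/497552425) * (z1 + x1 - 2*y1)*(z2 + x2 - 2*y2) + ((-40948153 : ℝ)/1990209700) * (z1 + x1 - 2*y1)*(w2 + x2 - 2*y2) + ((21863923 : ℝ)/1990209700) * (z2 + x2 - 2*y2)*(w1 + x1 - 2*y1) + ((-19631124 : ℝ)/497552425) * (w1 + x1 - 2*y1)*(w2 + x2 - 2*y2) + ((383505408 : ℝ)/497552425) * (x3 - y3 - (y1*x2 - x1*y2)/2) + ((-373377984 : ℝ)/497552425) * (z3 - y3 - (y1*z2 - z1*y2)/2) + ((-10127424 : ℝ)/497552425) * (w3 - y3 - (y1*w2 - w1*y2)/2))^2 +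
      ((4127743895 : ℝ)/3221225472) * ((1 : ℝ) * (x2 - y2)*(z2 + x2 - 2*y2) + ((-1883755 : ℝ)/825548779) * (x2 - y2)*(w2 + x2 - 2*y2) + ((-817621357 : ℝ)/8255487790) * (z1 + x1 - 2*y1)*(z1 + x1 - 2*y1) + ((11996664 : ℝ)/4127743895) * (z1 + x1 - 2*y1)*(w1 + x1 - 2*y1) + ((-1907910046 : ℝ)/4127743895) * (z2 + x2 - 2*y2)*(z2 + x2 - 2*y2) + ((-33726216 : ℝ)/4127743895) * (z2 + x2 - 2*y2)*(w2 + x2 - 2*y2) + ((19090813 : ℝ)/8255487790) * (w1 + x1 - 2*y1)*(w1 + x1 - 2*y1) + ((31292254 : ℝ)/4127743895) * (w2 + x2 - 2*y2)*(w2 + x2 - 2*y2))^2 +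
      ((199038622029 : ℝ)/2608607657984) * ((1 : ℝ) * (x2 - y2)*(w1 + x1 - 2*y1) + ((300959 : ℝ)/153917660) * (z1 + x1 - 2*y1)*(z2 + x2 - 2*y2) + ((1904947 : ℝ)/141030240) * (z1 + x1 - 2*y1)*(w2 + x2 - 2*y2) + ((-3118877 : ℝ)/141030240) * (z2 + x2 - 2*y2)*(w1 + x1 - 2*y1) + ((-55899289 : ℝ)/153917660) * (w1 + x1 - 2*y1)*(w2 + x2 - 2*y2) + ((128 : ℝ)/185) * (x3 - y3 - (y1*x2 - x1*y2)/2) + ((2848 : ℝ)/43105) * (z3 - y3 - (y1*z2 - z1*y2)/2) + ((-32672 : ℝ)/43105) * (w3 - y3 - (y1*w2 - w1*y2)/2))^2 +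
      ((4437026288902935 : ℝ)/3462602545954816) * ((1 : ℝ) * (x2 - y2)*(w2 + x2 - 2*y2) + ((14107340320349 : ℝ)/6761182916423520) * (z1 + x1 - 2*y1)*(z1 + x1 - 2*y1) + ((499861 : ℝ)/171596880) * (z1 + x1 - 2*y1)*(w1 + x1 - 2*y1) + ((5515686258223 : ℝ)/845147864552940) * (z2 + x2 - 2*y2)*(z2 + x2 - 2*y2) + ((-1405259 : ℝ)/171596880) * (z2 + x2 - 2*y2)*(w2 + x2 - 2*y2) + ((-669593601727411 : ℝ)/6761182916423520) * (w1 + x1 - 2*y1)*(w1 + x1 - 2*y1) + ((-390628437990377 : ℝ)/845147864552940) * (w2 + x2 - 2*y2)*(w2 + x2 - 2*y2))^2 +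
      ((442150389140235853 : ℝ)/9231268408556912640) * ((1 : ℝ) * (z1 + x1 - 2*y1)*(z1 + x1 - 2*y1) + ((-212720128519358773 : ℝ)/10611609339365660472) * (z1 + x1 - 2*y1)*(w1 + x1 - 2*y1) + ((2033124126644003383 : ℝ)/7074406226243773648) * (z2 + x2 - 2*y2)*(z2 + x2 - 2*y2) + ((-53615178589183093 : ℝ)/10611609339365660472) * (z2 + x2 - 2*y2)*(w2 + x2 - 2*y2) + ((-101123783546762822 : ℝ)/442150389140235853) * (w1 + x1 - 2*y1)*(w1 + x1 - 2*y1) + ((-1610332952783164217 : ℝ)/7074406226243773648) * (w2 + x2 - 2*y2)*(w2 + x2 - 2*y2))^2 +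
      ((86110374131 : ℝ)/1260893470720) * ((1 : ℝ) * (z1 + x1 - 2*y1)*(z2 + x2 - 2*y2) + ((446648055 : ℝ)/344441496524) * (z1 + x1 - 2*y1)*(w2 + x2 - 2*y2) + ((446648055 : ℝ)/344441496524) * (z2 + x2 - 2*y2)*(w1 + x1 - 2*y1) + ((-6470012077 : ℝ)/172220748262) * (w1 + x1 - 2*y1)*(w2 + x2 - 2*y2))^2 +
      ((3237203936434989728945581 : ℝ)/100143709871712181155790848) * ((1 : ℝ) * (z1 + x1 - 2*y1)*(w1 + x1 - 2*y1) + ((6797170586955546956019 : ℝ)/6474407872869979457891162) * (z2 + x2 - 2*y2)*(z2 + x2 - 2*y2) + ((37215320816393469177325 : ℝ)/3237203936434989728945581) * (z2 + x2 - 2*y2)*(w2 + x2 - 2*y2) + ((-118143189107450371230840 : ℝ)/3237203936434989728945581) * (w1 + x1 - 2*y1)*(w1 + x1 - 2*y1) + ((-92243438276030431873341 : ℝ)/6474407872869979457891162) * (w2 + x2 - 2*y2)*(w2 + x2 - 2*y2))^2 +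
      ((10297749077613985939 : ℝ)/315574984468432158720) * ((1 : ℝ) * (z1 + x1 - 2*y1)*(w2 + x2 - 2*y2) + ((-460030984699732829 : ℝ)/10297749077613985939) * (z2 + x2 - 2*y2)*(w1 + x1 - 2*y1) + ((4142363576975820 : ℝ)/1471107011087712277) * (w1 + x1 - 2*y1)*(w2 + x2 - 2*y2) + ((-637519877086341120 : ℝ)/10297749077613985939) * (z3 - y3 - (y1*z2 - z1*y2)/2) + ((637519877086341120 : ℝ)/10297749077613985939) * (w3 - y3 - (y1*w2 - w1*y2)/2))^2 +
      ((261022498062376292785427460627 : ℝ)/5940295120989697632532972699648) * ((1 : ℝ) * (z2 + x2 - 2*y2)*(z2 + x2 - 2*y2) + ((-1764237047162182409925023452 : ℝ)/87007499354125430928475820209) * (z2 + x2 - 2*y2)*(w2 + x2 - 2*y2) + ((-46056547996301817847928063980 : ℝ)/261022498062376292785427460627) * (w1 + x1 - 2*y1)*(w1 + x1 - 2*y1) + ((-46457002448963415818356278553 : ℝ)/261022498062376292785427460627) * (w2 + x2 - 2*y2)*(w2 + x2 - 2*y2))^2 +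
      ((10989157551642467221537 : ℝ)/337436641775255091249152) * ((1 : ℝ) * (z2 + x2 - 2*y2)*(w1 + x1 - 2*y1) + ((12444869115378 : ℝ)/4222196606400967) * (w1 + x1 - 2*y1)*(w2 + x2 - 2*y2) + ((154240 : ℝ)/2602711) * (z3 - y3 - (y1*z2 - z1*y2)/2) + ((-154240 : ℝ)/2602711) * (w3 - y3 - (y1*w2 - w1*y2)/2))^2 +
      ((23037484120623508949500784921635 : ℝ)/712765434708995530166073919152128) * ((1 : ℝ) * (z2 + x2 - 2*y2)*(w2 + x2 - 2*y2) + ((-125730758709847814523835147247 : ℝ)/9214993648249403579800313968654) * (w1 + x1 - 2*y1)*(w1 + x1 - 2*y1) + ((-333150162049175901284875651823 : ℝ)/9214993648249403579800313968654) * (w2 + x2 - 2*y2)*(w2 + x2 - 2*y2))^2 +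
      ((39835249090265153921402634197700085 : ℝ)/905870735597509369508690064374562816) * ((1 : ℝ) * (w1 + x1 - 2*y1)*(w1 + x1 - 2*y1) + ((1786190985331057905658746168958997 : ℝ)/7967049818053030784280526839540017) * (w2 + x2 - 2*y2)*(w2 + x2 - 2*y2))^2 +
      ((37740585086926185303 : ℝ)/553411753594187546624) * ((1 : ℝ) * (w1 + x1 - 2*y1)*(w2 + x2 - 2*y2))^2 +
      ((2725784324455877915865519654656069925 : ℝ)/65266072109490428184826075869511819264) * ((1 : ℝ) * (w2 + x2 - 2*y2)*(w2 + x2 - 2*y2))^2 +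
      ((1167 : ℝ)/1480) * ((1 : ℝ) * (x3 - y3 - (y1*x2 - x1*y2)/2) + ((313 : ℝ)/2334) * (z3 - y3 - (y1*z2 - z1*y2)/2) + ((313 : ℝ)/2334) * (w3 - y3 - (y1*w2 - w1*y2)/2))^2 +
      ((583739182999 : ℝ)/1555130233344) * ((1 : ℝ) * (z3 - y3 - (y1*z2 - z1*y2)/2) + ((-2103441905 : ℝ)/83391311857) * (w3 - y3 - (y1*w2 - w1*y2)/2))^2 +
      ((4468877446 : ℝ)/11913044551) * ((1 : ℝ) * (w3 - y3 - (y1*w2 - w1*y2)/2))^2 := by ring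
  linarith [hsos, key]
end
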